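/- Fix an integer k ≥ 1 and let η and J_i (0 ≤ i ≤ k−1) be the k×k matrices defined by η_{ab} = δ_{a+b, k+1} and (J_i)_{ab} = δ_{a−b, i}. Let C₀ be the set of k×k complex matrices C = Σ_{i=0}^{k−1} α_i J_i with α₀ = 1 whose coefficients satisfy 2α_{2n} + Σ_{i+j=2n, i≥1, j≥1} (−1)^i α_i α_j = 0 for all integers n with 2 ≤ 2n ≤ k−1. Then: (1) C₀ is an abelian group under matrix multiplication, i.e. every C ∈ C₀ is invertible, C₀ is closed under products and inverses, and any two elements of C₀ commute; (2) the map sending C = Σ α_i J_i ∈ C₀ to the tuple of its odd-indexed coefficients (α₁, α₃, α₅, …) is a bijection from C₀ onto ℂ^{⌊k/2⌋}; equivalently, for every choice of the odd-indexed coefficients there exist unique even-indexed coefficients α_{2n} (2 ≤ 2n ≤ k−1) making the relations hold. -/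

import Mathlib

/-!
The map `f ↦ ∑_{i<k} fᵢ Jᵢ` is a ring homomorphism `ℂ⟦X⟧ → Mat_k(ℂ)`, because
`Jᵢ Jⱼ = J_{i+j}` and `J_k = 0`. The coefficient of `x^{2n}` in `f(-x) f(x)` is
`2 f_{2n} + ∑_{i+j=2n, i,j≥1} (-1)^i fᵢ fⱼ` when `f(0) = 1`, and the odd coefficients
vanish since `f(-x) f(x)` is even; so `C₀` is the image of the series with `f(0) = 1` and
`f(-x) f(x) ≡ 1 mod x^k`. These form a group in the commutative ring `ℂ⟦X⟧`, with the
inverse of the image of `f` being the image of `f(-x)`.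

Given an odd series `O`, the series `f = √(1 + O²) + O` has odd part `O` and `f(-x) f(x) = 1`;
the square root exists by Hensel's lemma and is even by uniqueness of square roots with constant
term `1`. If `f` and `g` in `C₀` have the same odd coefficients below `k`, then `d = f - g`
satisfies `d(-x) ≡ d(x) mod x^k`, so modulo `x^k`
`0 ≡ f(-x) f(x) - g(-x) g(x) = d(x) (f(-x) + g(x)) + (d(-x) - d(x)) g(x) ≡ d(x) (f(-x) + g(x))`,
and `f(-x) + g(x)` is a unit.
-/

open Matrix

/-- The `k×k` matrix `J_i`: with 1-based indices, `(J_i) a b = 1` if `a - b = i`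
and `0` otherwise. -/
def Jmat (k i : ℕ) : Matrix (Fin k) (Fin k) ℂ :=
  Matrix.of fun a b => if (a : ℕ) = (b : ℕ) + i then 1 else 0

/-- The set `C₀(ℙ^{k-1})` of matrices `C = Σ_{i<k} αᵢ Jᵢ` with `α₀ = 1` whose coefficients
satisfy `2·α_{2n} + Σ_{i+j=2n, i,j≥1} (-1)^i αᵢ αⱼ = 0` for all `2 ≤ 2n ≤ k - 1`. -/
def Czero (k : ℕ) : Set (Matrix (Fin k) (Fin k) ℂ) :=
  {C | ∃ α : ℕ → ℂ, α 0 = 1 ∧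
    C = ∑ i ∈ Finset.range k, α i • Jmat k i ∧
    ∀ n : ℕ, 1 ≤ n → 2 * n ≤ k - 1 →
      2 * α (2 * n) + ∑ i ∈ Finset.Ico 1 (2 * n), (-1 : ℂ) ^ i * α i * α (2 * n - i) = 0}

namespace PowerSeries

section CommRing

variable {R : Type*} [CommRing R]

theorem constantCoeff_rescale (a : R) (f : R⟦X⟧) :
    constantCoeff (rescale a f) = constantCoeff f := by
  rw [← coeff_zero_eq_constantCoeff_apply, coeff_rescale, pow_zero, one_mul,
    coeff_zero_eq_constantCoeff_apply]

theorem rescale_neg_one_rescale_neg_one (f : R⟦X⟧) : rescale (-1) (rescale (-1) f) = f := by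
  rw [rescale_rescale, neg_one_mul, neg_neg, rescale_one, RingHom.id_apply]

theorem coeff_eq_zero_of_rescale_neg_one_eq_self [IsAddTorsionFree R] {f : R⟦X⟧}
    (hf : rescale (-1) f = f) {n : ℕ} (hn : Odd n) : coeff n f = 0 := by
  have := congrArg (coeff n) hf
  rwa [coeff_rescale, hn.neg_one_pow, neg_one_mul, neg_eq_self] at this

theorem rescale_neg_one_mul_self_invariant (f : R⟦X⟧) :
    rescale (-1) (rescale (-1) f * f) = rescale (-1) f * f := by
  rw [map_mul, rescale_neg_one_rescale_neg_one, mul_comm]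

theorem coeff_two_mul_rescale_neg_one_mul_self {f : R⟦X⟧} (hf : constantCoeff f = 1) {n : ℕ}
    (hn : 1 ≤ n) :
    coeff (2 * n) (rescale (-1) f * f) = 2 * coeff (2 * n) f +
      ∑ i ∈ Finset.Ico 1 (2 * n), (-1 : R) ^ i * coeff i f * coeff (2 * n - i) f := by
  rw [coeff_mul, Finset.Nat.sum_antidiagonal_eq_sum_range_succ
      (fun i j => coeff i (rescale (-1) f) * coeff j f), Finset.range_eq_Ico,
    Finset.sum_Ico_succ_top (Nat.zero_le _), Finset.sum_eq_sum_Ico_succ_bot (by omega)]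
  simp only [coeff_rescale, pow_zero, coeff_zero_eq_constantCoeff, hf, mul_one, tsub_zero,
    one_mul, zero_add, pow_mul, even_two, Even.neg_pow, one_pow, tsub_self]
  ring

end CommRing

section Field

variable {K : Type*} [Field K] [CharZero K]

theorem exists_sq_eq_one_add {h : K⟦X⟧} (hh : constantCoeff h = 0) :
    ∃ E : K⟦X⟧, constantCoeff E = 1 ∧ E ^ 2 = 1 + h := by
  obtain ⟨E, hE, hE1⟩ := HenselianRing.is_henselian (I := Ideal.span {(X : K⟦X⟧)})
    (Polynomial.X ^ 2 - Polynomial.C (1 + h)) (Polynomial.monic_X_pow_sub_C _ two_ne_zero) 1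
    (by simp [Ideal.mem_span_singleton, X_dvd_iff, hh])
    (by simpa [one_add_one_eq_two] using (isUnit_iff_constantCoeff.2 (by simp [map_ofNat]) :
      IsUnit (2 : K⟦X⟧)).map (Ideal.Quotient.mk _))
  refine ⟨E, ?_, by simpa [sub_eq_zero] using hE⟩
  have := X_dvd_iff.1 (Ideal.mem_span_singleton.1 hE1)
  rwa [map_sub, map_one, sub_eq_zero] at this

theorem eq_of_sq_eq_sq_of_constantCoeff_eq_one {E F : K⟦X⟧} (hE : constantCoeff E = 1)
    (hF : constantCoeff F = 1) (h : E ^ 2 = F ^ 2) : E = F := by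
  refine (sq_eq_sq_iff_eq_or_eq_neg.1 h).resolve_right fun hEF => ?_
  have := congrArg constantCoeff hEF
  rw [map_neg, hE, hF] at this
  norm_num at this

theorem exists_rescale_neg_one_mul_self_eq_one (o : ℕ → K) :
    ∃ f : K⟦X⟧, constantCoeff f = 1 ∧ rescale (-1) f * f = 1 ∧
      ∀ m, coeff (2 * m + 1) f = o m := by
  set O : K⟦X⟧ := mk fun n => if Odd n then o (n / 2) else 0
  have hO : rescale (-1) O = -O := by
    ext n
    by_cases hn : Odd n
    · simp [O, hn, hn.neg_one_pow]
    · simp [O, hn]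
  have hO0 : constantCoeff O = 0 := by simp [O]
  obtain ⟨E, hE0, hE⟩ := exists_sq_eq_one_add (h := O ^ 2) (by simp [hO0])
  have hE_even : rescale (-1) E = E := by
    refine eq_of_sq_eq_sq_of_constantCoeff_eq_one (by rwa [constantCoeff_rescale]) hE0 ?_
    rw [← map_pow, hE, map_add, map_one, map_pow, hO, neg_sq]
  refine ⟨E + O, by simp [hE0, hO0], ?_, fun m => ?_⟩
  · rw [map_add, hE_even, hO]
    linear_combination hE
  · simp [coeff_eq_zero_of_rescale_neg_one_eq_self hE_even (odd_two_mul_add_one m), O,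
      show (2 * m + 1) / 2 = m by omega]

end Field

end PowerSeries

open PowerSeries

theorem Jmat_zero (k : ℕ) : Jmat k 0 = 1 := by
  ext a b
  simp [Jmat, Matrix.one_apply, Fin.ext_iff]

theorem Jmat_eq_zero {k i : ℕ} (h : k ≤ i) : Jmat k i = 0 := by
  ext a b
  simp only [Jmat, Matrix.of_apply, Matrix.zero_apply, ite_eq_right_iff, one_ne_zero]
  omega

theorem Jmat_mul_Jmat (k i j : ℕ) : Jmat k i * Jmat k j = Jmat k (i + j) := by
  ext a b
  simp only [Jmat, Matrix.mul_apply, Matrix.of_apply, mul_ite, mul_one, mul_zero]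
  by_cases h : (a : ℕ) = b + (i + j)
  · rw [if_pos h, Fintype.sum_eq_single ⟨b + j, by omega⟩]
    · simp only [if_true]
      exact if_pos (by omega)
    · intro c hc
      have : (c : ℕ) ≠ b + j := fun h' => hc (Fin.ext h')
      simp [this]
  · rw [if_neg h]
    refine Finset.sum_eq_zero fun c _ => ?_
    split_ifs <;> first | rfl | omega

noncomputable def truncMatrix (k : ℕ) : ℂ⟦X⟧ →+* Matrix (Fin k) (Fin k) ℂ where
  toFun f := ∑ i ∈ Finset.range k, coeff i f • Jmat k i
  map_zero' := by simp
  map_add' f g := by simp [add_smul, Finset.sum_add_distrib]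
  map_one' := by
    rcases Nat.eq_zero_or_pos k with rfl | hk
    · exact Subsingleton.elim _ _
    · simp [coeff_one, Finset.sum_ite_eq', hk, Jmat_zero]
  map_mul' f g := by
    calc ∑ n ∈ Finset.range k, coeff n (f * g) • Jmat k n
        = ∑ n ∈ Finset.range k, ∑ i ∈ Finset.range (n + 1),
            (coeff i f * coeff (n - i) g) • Jmat k (i + (n - i)) := by
          refine Finset.sum_congr rfl fun n _ => ?_
          rw [coeff_mul, Finset.Nat.sum_antidiagonal_eq_sum_range_succ
            (fun i j => coeff i f * coeff j g), Finset.sum_smul]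
          refine Finset.sum_congr rfl fun i hi => ?_
          rw [Nat.add_sub_cancel' (Finset.mem_range_succ_iff.1 hi)]
      _ = ∑ i ∈ Finset.range k, ∑ j ∈ Finset.range (k - i),
            (coeff i f * coeff j g) • Jmat k (i + j) :=
          Finset.sum_range_diag_flip k fun i j => (coeff i f * coeff j g) • Jmat k (i + j)
      _ = ∑ i ∈ Finset.range k, ∑ j ∈ Finset.range k,
            (coeff i f * coeff j g) • Jmat k (i + j) := by
          refine Finset.sum_congr rfl fun i _ =>
            Finset.sum_subset (Finset.range_subset_range.2 (Nat.sub_le k i)) fun j _ hj => ?_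
          rw [Jmat_eq_zero (by simp only [Finset.mem_range] at hj; omega), smul_zero]
      _ = _ := by simp only [Finset.sum_mul_sum, smul_mul_smul_comm, Jmat_mul_Jmat]

theorem truncMatrix_apply (k : ℕ) (f : ℂ⟦X⟧) :
    truncMatrix k f = ∑ i ∈ Finset.range k, coeff i f • Jmat k i := rfl

theorem truncMatrix_apply_zero (k : ℕ) (f : ℂ⟦X⟧) (m : ℕ) (hm : m < k) :
    truncMatrix k f ⟨m, hm⟩ ⟨0, by omega⟩ = coeff m f := by
  simp [truncMatrix_apply, Jmat, Matrix.sum_apply, hm]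

theorem truncMatrix_eq_truncMatrix_iff {k : ℕ} {f g : ℂ⟦X⟧} :
    truncMatrix k f = truncMatrix k g ↔ ∀ m < k, coeff m f = coeff m g := by
  refine ⟨fun h m hm => ?_, fun h => ?_⟩
  · rw [← truncMatrix_apply_zero k f m hm, h, truncMatrix_apply_zero]
  · simp only [truncMatrix_apply]
    exact Finset.sum_congr rfl fun i hi => by rw [h i (Finset.mem_range.1 hi)]

theorem truncMatrix_rescale_neg_one_mul_self_eq_one_iff {k : ℕ} {f : ℂ⟦X⟧}
    (hf : constantCoeff f = 1) :
    truncMatrix k (rescale (-1) f * f) = 1 ↔ ∀ n : ℕ, 1 ≤ n → 2 * n ≤ k - 1 →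
      2 * coeff (2 * n) f +
        ∑ i ∈ Finset.Ico 1 (2 * n), (-1 : ℂ) ^ i * coeff i f * coeff (2 * n - i) f = 0 := by
  rw [← map_one (truncMatrix k), truncMatrix_eq_truncMatrix_iff]
  refine ⟨fun h n hn hnk => ?_, fun h m hm => ?_⟩
  · rw [← coeff_two_mul_rescale_neg_one_mul_self hf hn, h _ (by omega), coeff_one,
      if_neg (by omega)]
  · rcases Nat.even_or_odd' m with ⟨n, rfl | rfl⟩
    · rcases Nat.eq_zero_or_pos n with rfl | hn
      · simp [constantCoeff_rescale, hf]
      · rw [coeff_two_mul_rescale_neg_one_mul_self hf hn, h n hn (by omega), coeff_one,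
          if_neg (by omega)]
    · rw [coeff_eq_zero_of_rescale_neg_one_eq_self (rescale_neg_one_mul_self_invariant f)
        (odd_two_mul_add_one n), coeff_one, if_neg (by omega)]

theorem mem_Czero_iff {k : ℕ} {C : Matrix (Fin k) (Fin k) ℂ} :
    C ∈ Czero k ↔ ∃ f : ℂ⟦X⟧, constantCoeff f = 1 ∧
      truncMatrix k (rescale (-1) f * f) = 1 ∧ truncMatrix k f = C := by
  constructor
  · rintro ⟨α, h0, rfl, hrel⟩
    have hf : constantCoeff (mk α) = 1 := by rwa [← coeff_zero_eq_constantCoeff_apply, coeff_mk]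
    refine ⟨mk α, hf, (truncMatrix_rescale_neg_one_mul_self_eq_one_iff hf).2 ?_, ?_⟩
    · simpa only [coeff_mk] using hrel
    · simp only [truncMatrix_apply, coeff_mk]
  · rintro ⟨f, hf, hrel, rfl⟩
    refine ⟨fun i => coeff i f, by simpa using hf, rfl, ?_⟩
    exact (truncMatrix_rescale_neg_one_mul_self_eq_one_iff hf).1 hrel

theorem isUnit_of_mem_Czero {k : ℕ} {C : Matrix (Fin k) (Fin k) ℂ} (hC : C ∈ Czero k) :
    IsUnit C := by
  obtain ⟨f, hf, -, rfl⟩ := mem_Czero_iff.1 hC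
  exact (isUnit_iff_constantCoeff.2 (hf ▸ isUnit_one)).map _

theorem mul_mem_Czero {k : ℕ} {C D : Matrix (Fin k) (Fin k) ℂ} (hC : C ∈ Czero k)
    (hD : D ∈ Czero k) : C * D ∈ Czero k := by
  obtain ⟨f, hf, hf', rfl⟩ := mem_Czero_iff.1 hC
  obtain ⟨g, hg, hg', rfl⟩ := mem_Czero_iff.1 hD
  refine mem_Czero_iff.2 ⟨f * g, by rw [map_mul, hf, hg, one_mul], ?_, map_mul _ _ _⟩
  rw [map_mul (rescale _), mul_mul_mul_comm, map_mul, hf', hg', one_mul]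

theorem inv_mem_Czero {k : ℕ} {C : Matrix (Fin k) (Fin k) ℂ} (hC : C ∈ Czero k) :
    C⁻¹ ∈ Czero k := by
  obtain ⟨f, hf, hf', rfl⟩ := mem_Czero_iff.1 hC
  rw [Matrix.inv_eq_left_inv (by rwa [← map_mul])]
  refine mem_Czero_iff.2 ⟨rescale (-1) f, ?_, ?_, rfl⟩
  · rwa [constantCoeff_rescale]
  · rwa [rescale_neg_one_rescale_neg_one, mul_comm]

theorem mul_comm_of_mem_Czero {k : ℕ} {C D : Matrix (Fin k) (Fin k) ℂ} (hC : C ∈ Czero k)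
    (hD : D ∈ Czero k) : C * D = D * C := by
  obtain ⟨f, -, -, rfl⟩ := mem_Czero_iff.1 hC
  obtain ⟨g, -, -, rfl⟩ := mem_Czero_iff.1 hD
  rw [← map_mul, mul_comm, map_mul]

theorem truncMatrix_eq_of_coeff_odd_eq {k : ℕ} {f g : ℂ⟦X⟧} (hf : constantCoeff f = 1)
    (hg : constantCoeff g = 1) (hf' : truncMatrix k (rescale (-1) f * f) = 1)
    (hg' : truncMatrix k (rescale (-1) g * g) = 1)
    (hfg : ∀ m, 2 * m + 1 < k → coeff (2 * m + 1) f = coeff (2 * m + 1) g) :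
    truncMatrix k f = truncMatrix k g := by
  have hd : truncMatrix k (rescale (-1) (f - g) - (f - g)) = 0 := by
    refine (map_sub _ _ _).trans (sub_eq_zero.2 (truncMatrix_eq_truncMatrix_iff.2 fun m hm => ?_))
    rcases Nat.even_or_odd' m with ⟨n, rfl | rfl⟩
    · simp [coeff_rescale, pow_mul]
    · simp [hfg n hm]
  have hu : IsUnit (truncMatrix k (rescale (-1) f + g)) := by
    refine (isUnit_iff_constantCoeff.2 ?_).map _
    rw [map_add, constantCoeff_rescale, hf, hg]
    norm_num
  have key : rescale (-1) f * f - rescale (-1) g * g =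
      (f - g) * (rescale (-1) f + g) + (rescale (-1) (f - g) - (f - g)) * g := by
    rw [map_sub]
    ring
  have h0 : truncMatrix k (f - g) * truncMatrix k (rescale (-1) f + g) = 0 := by
    have := congrArg (truncMatrix k) key
    rwa [map_add, map_mul, map_mul, hd, zero_mul, add_zero, map_sub, hf', hg', sub_self,
      eq_comm] at this
  rwa [hu.mul_left_eq_zero, map_sub, sub_eq_zero] at h0

theorem existsUnique_mem_Czero_odd_entries (k : ℕ) (o : ℕ → ℂ) :
    ∃! C : Matrix (Fin k) (Fin k) ℂ, C ∈ Czero k ∧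
      ∀ (m : ℕ) (h : 2 * m + 1 < k),
        C ⟨2 * m + 1, h⟩ ⟨0, Nat.zero_lt_of_lt h⟩ = o m := by
  obtain ⟨f, hf, hf', hodd⟩ := exists_rescale_neg_one_mul_self_eq_one o
  have hfC : truncMatrix k (rescale (-1) f * f) = 1 := by rw [hf', map_one]
  refine ⟨truncMatrix k f, ⟨mem_Czero_iff.2 ⟨f, hf, hfC, rfl⟩, fun m h => ?_⟩, ?_⟩
  · rw [truncMatrix_apply_zero, hodd]
  · rintro C ⟨hC, hCo⟩
    obtain ⟨g, hg, hg', rfl⟩ := mem_Czero_iff.1 hC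
    refine truncMatrix_eq_of_coeff_odd_eq hg hf hg' hfC fun m hm => ?_
    rw [← truncMatrix_apply_zero k g _ hm, hCo, hodd]

/-- `C₀(ℙ^{k-1})` is an abelian group under matrix multiplication (its elements are
invertible, and it is closed under products and inverses, with any two elements
commuting), and the map assigning to `C = Σ αᵢ Jᵢ ∈ C₀` the tuple of its odd-indexed
coefficients `α₁, α₃, …` (read off from the entries `C (2m+1) 0`) is a bijection onto
`ℂ^⌊k/2⌋`: every prescription of the odd coefficients is attained by exactly one
element of `C₀`. -/
theorem stmt_12 (k : ℕ) :
    (∀ C ∈ Czero k, IsUnit C) ∧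
    (∀ C ∈ Czero k, ∀ D ∈ Czero k, C * D ∈ Czero k) ∧
    (∀ C ∈ Czero k, C⁻¹ ∈ Czero k) ∧
    (∀ C ∈ Czero k, ∀ D ∈ Czero k, C * D = D * C) ∧
    (∀ o : ℕ → ℂ, ∃! C : Matrix (Fin k) (Fin k) ℂ,
      C ∈ Czero k ∧
        ∀ (m : ℕ) (h : 2 * m + 1 < k), C ⟨2 * m + 1, h⟩ ⟨0, by omega⟩ = o m) :=
  ⟨fun _ => isUnit_of_mem_Czero, fun _ hC _ hD => mul_mem_Czero hC hD, fun _ => inv_mem_Czero,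
    fun _ hC _ hD => mul_comm_of_mem_Czero hC hD, existsUnique_mem_Czero_odd_entries k⟩
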